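/- In a pointed regular category, for a morphism i : I → Y the following are equivalent: (i) i is an ideal; (ii) i is the zero-class of a surjective left split relation; (iii) i is the zero-class of a surjective relation. -/

import Mathlib

open CategoryTheory CategoryTheory.Limits

universe v u

variable {C : Type u} [Category.{v} C]

/-- `i : I ⟶ Y` is a zero-class of the span `(d : R ⟶ X, c : R ⟶ Y)`:
it fits in a pullback of `⟨d,c⟩` along `⟨0, 1_Y⟩`. -/
def IsZeroClass [HasZeroMorphisms C] [HasBinaryProducts C]
    {R X Y I : C} (d : R ⟶ X) (c : R ⟶ Y) (i : I ⟶ Y) : Prop :=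
  ∃ l : I ⟶ R, IsPullback l i (prod.lift d c) (prod.lift (0 : Y ⟶ X) (𝟙 Y))

/-- `k : K ⟶ X` is a clot: a monomorphism which is the zero-class of a reflexive
relation on `X`. -/
def IsClot [HasZeroMorphisms C] [HasBinaryProducts C] {K X : C} (k : K ⟶ X) : Prop :=
  Mono k ∧ ∃ (R : C) (d c : R ⟶ X) (e : X ⟶ R),
    Mono (prod.lift d c) ∧ e ≫ d = 𝟙 X ∧ e ≫ c = 𝟙 X ∧ IsZeroClass d c k

/-- `i : I ⟶ Y` is an ideal: a monomorphism which is the regular image of a clot,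
i.e. there are a clot `k : K ⟶ X` and regular epimorphisms `p : X ⟶ Y`, `q : K ⟶ I`
with `i ∘ q = p ∘ k`. -/
def IsIdeal [HasZeroMorphisms C] [HasBinaryProducts C] {I Y : C} (i : I ⟶ Y) : Prop :=
  Mono i ∧ ∃ (K X : C) (k : K ⟶ X) (p : X ⟶ Y) (q : K ⟶ I),
    IsClot k ∧ Nonempty (RegularEpi p) ∧ Nonempty (RegularEpi q) ∧ q ≫ i = k ≫ p

/-- A regular category: finitely complete, with coequalizers of kernel pairs,
and regular epimorphisms stable under pullback. -/
class RegularCategory (C : Type u) [Category.{v} C] extends HasFiniteLimits C : Prop where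
  hasCoequalizerOfKernelPair : ∀ {X Y : C} (f : X ⟶ Y),
    HasCoequalizer (pullback.fst f f) (pullback.snd f f)
  regularEpiStable : ∀ {P X Y Z : C} (f : X ⟶ Z) (g : Y ⟶ Z) (fst : P ⟶ X) (snd : P ⟶ Y),
    IsPullback fst snd f g → Nonempty (RegularEpi f) → Nonempty (RegularEpi snd)

/-!
The zero class of a span `(d, c)` is the image under `c` of the kernel of `d`. So the zero class
of a surjective relation `(d, c)` is the regular image under `c` of `ker d`, and `ker d` is a clot:
the zero class of the kernel pair of `d`. Conversely, let `i` be the regular image under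
`p : X ⟶ Y` of the zero class `k` of a reflexive relation `d₀, c₀ : R₀ ⟶ X`. The regular image
`(d, c)` of the span `(d₀, c₀ ≫ p)` is a left split relation, surjective because `c₀` is split.
The kernel of `d` pulls back along the regular epimorphism `R₀ ⟶ R` to the kernel of `d₀`, so
the zero class of `(d, c)` is the regular image of `k ≫ p`, which is `i`.
-/

instance RegularCategory.regular [RegularCategory C] : Regular C where
  hasCoequalizer_of_isKernelPair {_ _ _ f _ _} h :=
    haveI := RegularCategory.hasCoequalizerOfKernelPair f
    hasColimit_of_iso (parallelPair.ext (F := parallelPair _ _)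
      (G := parallelPair (pullback.fst f f) (pullback.snd f f)) h.isoPullback (Iso.refl _)
      (by simp) (by simp))
  regularEpiIsStableUnderBaseChange :=
    ⟨fun sq hg => ⟨RegularCategory.regularEpiStable _ _ _ _ sq hg.regularEpi⟩⟩

theorem exists_iso_of_strongEpi_mono_fac {A I J B : C} {q : A ⟶ I} {i : I ⟶ B} {t : A ⟶ J}
    {j : J ⟶ B} [StrongEpi q] [Mono i] [StrongEpi t] [Mono j] (h : q ≫ i = t ≫ j) :
    ∃ ψ : I ≅ J, ψ.hom ≫ j = i :=
  let F : StrongEpiMonoFactorisation (q ≫ i) := { I := I, m := i, e := q }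
  let G : StrongEpiMonoFactorisation (q ≫ i) := { I := J, m := j, e := t, fac := h.symm }
  ⟨IsImage.isoExt F.toMonoIsImage G.toMonoIsImage, IsImage.isoExt_hom_m _ _⟩

theorem isPullback_of_isLimit_kernelFork [HasZeroMorphisms C] {A B X K J : C} {ρ : A ⟶ B}
    {d : B ⟶ X} {m : K ⟶ A} {t : K ⟶ J} {j : J ⟶ B} [Mono j] (hj : j ≫ d = 0)
    (w : m ≫ ρ = t ≫ j) (hm : m ≫ ρ ≫ d = 0) (hk : IsLimit (KernelFork.ofι m hm)) :
    IsPullback m t ρ j := by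
  have : Mono m := Fork.IsLimit.mono hk
  have hs (s : PullbackCone ρ j) : s.fst ≫ ρ ≫ d = 0 := by
    rw [← Category.assoc, s.condition, Category.assoc, hj, comp_zero]
  let lift s := KernelFork.IsLimit.lift' hk _ (hs s)
  have hlift s : (lift s).1 ≫ m = s.fst := (lift s).2
  refine IsPullback.of_isLimit' ⟨w⟩ (PullbackCone.IsLimit.mk _
    (fun s => (lift s).1) hlift (fun s => ?_) (fun s u hu _ => ?_))
  · rw [← cancel_mono j, Category.assoc, ← w, ← Category.assoc, hlift, s.condition]
  · rw [← cancel_mono m, hu, hlift]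

section ZeroClass

variable [HasZeroMorphisms C] [HasBinaryProducts C] {R X Y I : C} {d : R ⟶ X} {c : R ⟶ Y}
  {i : I ⟶ Y}

theorem isPullback_prodLift_iff_isLimit_kernelFork {l : I ⟶ R} (hl : l ≫ d = 0) :
    IsPullback l (l ≫ c) (prod.lift d c) (prod.lift (0 : Y ⟶ X) (𝟙 Y)) ↔
      Nonempty (IsLimit (KernelFork.ofι l hl)) := by
  constructor
  · intro h
    exact ⟨KernelFork.IsLimit.ofι _ _
      (fun s hs => h.lift s (s ≫ c) (by ext <;> simp [hs]))
      (fun s hs => h.lift_fst _ _ _)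
      (fun s hs m hm => h.hom_ext (by simp [hm]) (by simp [← hm]))⟩
  · rintro ⟨hk⟩
    have : Mono l := Fork.IsLimit.mono hk
    have hs (s : PullbackCone (prod.lift d c) (prod.lift (0 : Y ⟶ X) (𝟙 Y))) :
        s.fst ≫ d = 0 ∧ s.fst ≫ c = s.snd :=
      ⟨by simpa [prod.lift_fst] using s.condition =≫ prod.fst,
        by simpa [prod.lift_snd] using s.condition =≫ prod.snd⟩
    let lift s := KernelFork.IsLimit.lift' hk _ (hs s).1
    have hlift s : (lift s).1 ≫ l = s.fst := (lift s).2
    refine IsPullback.of_isLimit' ⟨by ext <;> simp [hl]⟩ (PullbackCone.IsLimit.mk _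
      (fun s => (lift s).1) hlift (fun s => ?_) (fun s m hm _ => ?_))
    · rw [← (hs s).2, ← Category.assoc, hlift]
    · rw [← cancel_mono l, hm, hlift]

theorem isZeroClass_iff_exists_isLimit_kernelFork :
    IsZeroClass d c i ↔
      ∃ (l : I ⟶ R) (hl : l ≫ d = 0), l ≫ c = i ∧ Nonempty (IsLimit (KernelFork.ofι l hl)) := by
  constructor
  · rintro ⟨l, h⟩
    have hl : l ≫ d = 0 := by simpa [prod.lift_fst] using h.w =≫ prod.fst
    have hc : l ≫ c = i := by simpa [prod.lift_snd] using h.w =≫ prod.snd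
    subst hc
    exact ⟨l, hl, rfl, (isPullback_prodLift_iff_isLimit_kernelFork hl).1 h⟩
  · rintro ⟨l, hl, rfl, hk⟩
    exact ⟨l, (isPullback_prodLift_iff_isLimit_kernelFork hl).2 hk⟩

theorem IsZeroClass.mono (hdc : Mono (prod.lift d c)) (h : IsZeroClass d c i) : Mono i :=
  h.choose_spec.mono_snd_of_mono

theorem IsZeroClass.comp {Y' : C} (h : IsZeroClass d c i) (p : Y ⟶ Y') :
    IsZeroClass d (c ≫ p) (i ≫ p) := by
  obtain ⟨l, hl, rfl, hk⟩ := isZeroClass_iff_exists_isLimit_kernelFork.1 h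
  exact isZeroClass_iff_exists_isLimit_kernelFork.2 ⟨l, hl, by simp, hk⟩

theorem IsZeroClass.iso_hom_comp {I' : C} (h : IsZeroClass d c i) (ψ : I' ≅ I) :
    IsZeroClass d c (ψ.hom ≫ i) := by
  obtain ⟨l, hl, rfl, ⟨hk⟩⟩ := isZeroClass_iff_exists_isLimit_kernelFork.1 h
  exact isZeroClass_iff_exists_isLimit_kernelFork.2 ⟨ψ.hom ≫ l, by simp [hl], by simp,
    ⟨IsKernel.isoKernel d _ hk ψ rfl⟩⟩

theorem isZeroClass_pullback_fst_snd [HasPullback d d] {l : I ⟶ R} {hl : l ≫ d = 0}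
    (hk : IsLimit (KernelFork.ofι l hl)) :
    IsZeroClass (pullback.fst d d) (pullback.snd d d) l := by
  have : Mono l := Fork.IsLimit.mono hk
  let m : I ⟶ pullback d d := pullback.lift 0 l (by simp [hl])
  have hm₁ : m ≫ pullback.fst d d = 0 := pullback.lift_fst _ _ _
  have hm₂ : m ≫ pullback.snd d d = l := pullback.lift_snd _ _ _
  let lift {W : C} (s : W ⟶ pullback d d) (hs : s ≫ pullback.fst d d = 0) :=
    KernelFork.IsLimit.lift' hk (s ≫ pullback.snd d d)
      (by rw [Category.assoc, ← pullback.condition, ← Category.assoc, hs, zero_comp])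
  have hlift {W : C} (s : W ⟶ pullback d d) hs : (lift s hs).1 ≫ l = s ≫ pullback.snd d d :=
    (lift s hs).2
  refine isZeroClass_iff_exists_isLimit_kernelFork.2 ⟨m, hm₁, hm₂, ⟨KernelFork.IsLimit.ofι _ _
    (fun s hs => (lift s hs).1) (fun s hs => ?_) (fun s hs u hu => ?_)⟩⟩
  · apply pullback.hom_ext
    · simp [hm₁, hs]
    · simp [hm₂, hlift]
  · rw [← cancel_mono l, hlift s hs, ← hu, Category.assoc, hm₂]

theorem isClot_of_isLimit_kernelFork [HasPullback d d] {l : I ⟶ R} {hl : l ≫ d = 0}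
    (hk : IsLimit (KernelFork.ofι l hl)) : IsClot l :=
  ⟨Fork.IsLimit.mono hk, pullback d d, pullback.fst d d, pullback.snd d d,
    pullback.lift (𝟙 R) (𝟙 R) rfl, inferInstance, pullback.lift_fst _ _ _, pullback.lift_snd _ _ _,
    isZeroClass_pullback_fst_snd hk⟩

theorem IsZeroClass.isIdeal [HasPullback d d] (hdc : Mono (prod.lift d c))
    (hc : Nonempty (RegularEpi c)) (h : IsZeroClass d c i) : IsIdeal i := by
  obtain ⟨l, hl, rfl, ⟨hk⟩⟩ := isZeroClass_iff_exists_isLimit_kernelFork.1 h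
  exact ⟨h.mono hdc, I, R, l, c, 𝟙 I, isClot_of_isLimit_kernelFork hk, hc,
    ⟨RegularEpi.ofIso (Iso.refl I)⟩, by simp⟩

end ZeroClass

section Regular

variable [Regular C] [HasZeroMorphisms C]

theorem IsZeroClass.exists_isRegularEpi_of_comp {R₀ R X Y I₀ : C} (ρ : R₀ ⟶ R) [IsRegularEpi ρ]
    (d : R ⟶ X) (c : R ⟶ Y) {i₀ : I₀ ⟶ Y} (h : IsZeroClass (ρ ≫ d) (ρ ≫ c) i₀) :
    ∃ (J : C) (t : I₀ ⟶ J) (j : J ⟶ Y), IsRegularEpi t ∧ IsZeroClass d c j ∧ t ≫ j = i₀ := by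
  obtain ⟨m, hm, rfl, ⟨hk⟩⟩ := isZeroClass_iff_exists_isLimit_kernelFork.1 h
  let t := kernel.lift d (m ≫ ρ) (by rw [Category.assoc, hm])
  have ht : t ≫ kernel.ι d = m ≫ ρ := kernel.lift_ι _ _ _
  have hpb : IsPullback m t ρ (kernel.ι d) :=
    isPullback_of_isLimit_kernelFork (kernel.condition d) ht.symm hm hk
  refine ⟨kernel d, t, kernel.ι d ≫ c,
    Regular.regularEpiIsStableUnderBaseChange.of_isPullback hpb ‹IsRegularEpi ρ›,
    isZeroClass_iff_exists_isLimit_kernelFork.2 ⟨_, kernel.condition d, rfl, ⟨kernelIsKernel d⟩⟩,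
    by rw [← Category.assoc, ht, Category.assoc]⟩

theorem IsIdeal.exists_leftSplit_surjective_relation {I Y : C} {i : I ⟶ Y} (h : IsIdeal i) :
    ∃ (X R : C) (d : R ⟶ X) (c : R ⟶ Y) (e : X ⟶ R),
      Mono (prod.lift d c) ∧ e ≫ d = 𝟙 X ∧ Nonempty (RegularEpi c) ∧ IsZeroClass d c i := by
  obtain ⟨hi, K, X, k, p, q, ⟨-, R₀, d₀, c₀, e₀, -, hed, hec, hk⟩, ⟨hp⟩, ⟨hq⟩, hqi⟩ := h
  let F := Regular.strongEpiMonoFactorisation (prod.lift d₀ (c₀ ≫ p))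
  set d := F.m ≫ prod.fst
  set c := F.m ≫ prod.snd
  have hd : F.e ≫ d = d₀ := by rw [← Category.assoc, F.fac, prod.lift_fst]
  have hc : F.e ≫ c = c₀ ≫ p := by rw [← Category.assoc, F.fac, prod.lift_snd]
  have hdc : prod.lift d c = F.m := by ext <;> simp [d, c, prod.lift_fst, prod.lift_snd]
  obtain ⟨J, t, j, ht, hj, htj⟩ :=
    IsZeroClass.exists_isRegularEpi_of_comp F.e d c (by rw [hd, hc]; exact hk.comp p)
  have : Mono j := hj.mono (by rw [hdc]; infer_instance)
  have := isRegularEpi_of_regularEpi hq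
  obtain ⟨ψ, hψ⟩ := exists_iso_of_strongEpi_mono_fac (hqi.trans htj.symm)
  have hc_regular : IsRegularEpi c := by
    have := isRegularEpi_of_regularEpi hp
    have : IsSplitEpi c₀ := IsSplitEpi.mk' ⟨e₀, hec⟩
    have : StrongEpi (F.e ≫ c) := by rw [hc]; exact strongEpi_comp c₀ p
    have := strongEpi_of_strongEpi F.e c
    infer_instance
  exact ⟨X, F.I, d, c, e₀ ≫ F.e, by rw [hdc]; infer_instance, by rw [Category.assoc, hd, hed],
    hc_regular.regularEpi, hψ ▸ hj.iso_hom_comp ψ⟩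

end Regular

theorem isIdeal_iff_zeroClass_surjective_relation_general {C : Type u} [Category.{v} C]
    [HasZeroMorphisms C] [RegularCategory C]
    {I Y : C} (i : I ⟶ Y) :
    (IsIdeal i ↔
      ∃ (X R : C) (d : R ⟶ X) (c : R ⟶ Y) (e : X ⟶ R),
        Mono (prod.lift d c) ∧ e ≫ d = 𝟙 X ∧ Nonempty (RegularEpi c) ∧
        IsZeroClass d c i) ∧
    (IsIdeal i ↔
      ∃ (X R : C) (d : R ⟶ X) (c : R ⟶ Y),
        Mono (prod.lift d c) ∧ Nonempty (RegularEpi c) ∧ IsZeroClass d c i) := by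
  refine ⟨⟨IsIdeal.exists_leftSplit_surjective_relation,
    fun ⟨_, _, _, _, _, hdc, _, hc, h⟩ => h.isIdeal hdc hc⟩,
    ⟨fun hi => ?_, fun ⟨_, _, _, _, hdc, hc, h⟩ => h.isIdeal hdc hc⟩⟩
  obtain ⟨X, R, d, c, -, hdc, -, hc, h⟩ := hi.exists_leftSplit_surjective_relation
  exact ⟨X, R, d, c, hdc, hc, h⟩

/-- **Main theorem.** In a pointed regular category, for a morphism `i : I ⟶ Y` the
following are equivalent: (i) `i` is an ideal; (ii) `i` is the zero-class of a surjective
left split relation; (iii) `i` is the zero-class of a surjective relation. -/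
theorem isIdeal_iff_zeroClass_surjective_relation {C : Type u} [Category.{v} C]
    [HasZeroObject C] [HasZeroMorphisms C] [RegularCategory C]
    {I Y : C} (i : I ⟶ Y) :
    (IsIdeal i ↔
      ∃ (X R : C) (d : R ⟶ X) (c : R ⟶ Y) (e : X ⟶ R),
        Mono (prod.lift d c) ∧ e ≫ d = 𝟙 X ∧ Nonempty (RegularEpi c) ∧
        IsZeroClass d c i) ∧
    (IsIdeal i ↔
      ∃ (X R : C) (d : R ⟶ X) (c : R ⟶ Y),
        Mono (prod.lift d c) ∧ Nonempty (RegularEpi c) ∧ IsZeroClass d c i) :=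
  isIdeal_iff_zeroClass_surjective_relation_general i
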